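/- For every positive integer n, the perfect edge-magic deficiency of the star K_{1,n} is finite: there exists a nonnegative integer l such that K_{1,n} ∪ lK_1 is perfect edge-magic. -/

import Mathlib

/-- `f` is an edge-magic labeling of the graph `G` with valence `k`:
`f` is a bijection from `V(G) ∪ E(G)` onto `{1, …, p + q}` and
`f u + f v + f uv = k` for every edge `uv`. -/
def IsEdgeMagic {V : Type*} [Fintype V] (G : SimpleGraph V)
    (f : V ⊕ G.edgeSet → ℕ) (k : ℕ) : Prop :=
  Set.BijOn f Set.univ (Set.Icc 1 (Fintype.card V + G.edgeSet.ncard)) ∧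
  ∀ u v, ∀ h : G.Adj u v,
    f (Sum.inl u) + f (Sum.inl v) + f (Sum.inr ⟨s(u, v), G.mem_edgeSet.mpr h⟩) = k

/-- `f` is a super edge-magic labeling of `G` with valence `k`: an edge-magic
labeling whose vertex labels are exactly `{1, …, p}`. -/
def IsSuperEdgeMagic {V : Type*} [Fintype V] (G : SimpleGraph V)
    (f : V ⊕ G.edgeSet → ℕ) (k : ℕ) : Prop :=
  IsEdgeMagic G f k ∧ ∀ v, f (Sum.inl v) ∈ Set.Icc 1 (Fintype.card V)

/-- The graph `K_{1,n} ∪ lK_1`: the disjoint union of the star `K_{1,n}`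
(with center `0` and leaves `1, …, n`) and `l` isolated vertices
(`n+1, …, n+l`), on `n + l + 1` vertices. -/
def starUnion (n l : ℕ) : SimpleGraph (Fin (n + l + 1)) where
  Adj u v := (u = 0 ∧ v ≠ 0 ∧ (v : ℕ) ≤ n) ∨ (v = 0 ∧ u ≠ 0 ∧ (u : ℕ) ≤ n)
  symm := ⟨fun u v h => h.symm⟩
  loopless := ⟨fun v h => by rcases h with ⟨h1, h2, _⟩ | ⟨h1, h2, _⟩ <;> exact h2 h1⟩

/-- For a bijection `g : V(G) ∪ E(G) → {1, …, p + q}`, the rational number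
`t(g) = (Σ_{u ∈ V(G)} deg(u)·g(u) + Σ_{e ∈ E(G)} g(e)) / q`. -/
noncomputable def emAvg {V : Type*} [Fintype V] [DecidableEq V] (G : SimpleGraph V)
    [DecidableRel G.Adj] (g : V ⊕ G.edgeSet → ℕ) : ℚ :=
  ((∑ v : V, (G.degree v : ℚ) * (g (Sum.inl v) : ℚ)) +
    ∑ e : G.edgeSet, (g (Sum.inr e) : ℚ)) / (G.edgeSet.ncard : ℚ)

/-- `G` is perfect edge-magic: every integer `k` in the edge-magic interval
`λ_G = [⌈min_g t(g)⌉, ⌊max_g t(g)⌋]` (where `g` ranges over all bijections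
`V(G) ∪ E(G) → {1, …, p + q}`) is the valence of some edge-magic labeling of
`G`.  Here `⌈min_g t(g)⌉ ≤ k` is rendered as `∃ g, ⌈t(g)⌉ ≤ k`, and
`k ≤ ⌊max_g t(g)⌋` as `∃ g, k ≤ ⌊t(g)⌋`, which is equivalent since the ceiling
and floor functions are monotone and the set of bijections is finite and
nonempty. -/
def IsPerfectEdgeMagic {V : Type*} [Fintype V] [DecidableEq V] (G : SimpleGraph V)
    [DecidableRel G.Adj] : Prop :=
  ∀ k : ℕ,
    (∃ g : V ⊕ G.edgeSet → ℕ,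
      Set.BijOn g Set.univ (Set.Icc 1 (Fintype.card V + G.edgeSet.ncard)) ∧
      ⌈emAvg G g⌉ ≤ (k : ℤ)) →
    (∃ g : V ⊕ G.edgeSet → ℕ,
      Set.BijOn g Set.univ (Set.Icc 1 (Fintype.card V + G.edgeSet.ncard)) ∧
      (k : ℤ) ≤ ⌊emAvg G g⌋) →
    ∃ f, IsEdgeMagic G f k

instance (n l : ℕ) : DecidableRel (starUnion n l).Adj := fun u v =>
  inferInstanceAs (Decidable ((u = 0 ∧ v ≠ 0 ∧ (v : ℕ) ≤ n) ∨ (v = 0 ∧ u ≠ 0 ∧ (u : ℕ) ≤ n)))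

/-! Take `l = 2n`, so that `p + q = 4n + 1`. For any labeling `g`, the numerator of `t(g)` is
`(n - 1) g(c) + Σ_S g`, where `c` is the center and `S` consists of the `2n + 1` labels of the
center, the leaves and the edges; as these are distinct positive integers, `t(g) ≥ 2n + 4`.
Applying this to the dual labeling `4n + 2 - g` gives `t(g) ≤ 10n + 2`. Every valence
`k ∈ [2n + 4, 6n + 4]` is realised by giving the center label `1`, the leaves a block of
consecutive labels and the edges another block in reverse order, filling in the isolated
vertices arbitrarily; the duals of these labelings have valence `12n + 6 - k` and cover the rest
of the interval. -/

open Finset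

theorem Finset.card_mul_card_add_one_le_two_mul_sum {s : Finset ℕ} (hs : ∀ x ∈ s, 1 ≤ x) :
    #s * (#s + 1) ≤ 2 * ∑ x ∈ s, x := by
  induction s using Finset.induction_on_max with
  | empty => simp
  | insert a s ha ih =>
    have ha' : a ∉ s := fun h => lt_irrefl a (ha a h)
    have hsub : s ⊆ Ico 1 a := fun x hx => mem_Ico.2 ⟨hs x (mem_insert_of_mem hx), ha x hx⟩
    have hcard : #s + 1 ≤ a := by
      have := card_le_card hsub
      rw [Nat.card_Ico] at this
      have := hs a (mem_insert_self a s)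
      omega
    have ih' := ih fun x hx => hs x (mem_insert_of_mem hx)
    rw [card_insert_of_notMem ha', sum_insert ha']
    nlinarith

theorem Finset.card_mul_card_add_one_le_two_mul_sum_of_injOn {α : Type*} {s : Finset α}
    {g : α → ℕ} (hg : Set.InjOn g s) (hpos : ∀ x ∈ s, 1 ≤ g x) :
    #s * (#s + 1) ≤ 2 * ∑ x ∈ s, g x := by
  classical
  have := card_mul_card_add_one_le_two_mul_sum (s := s.image g) (by simpa using hpos)
  rwa [card_image_of_injOn hg, sum_image hg] at this

theorem bijOn_reflect_Icc (N : ℕ) :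
    Set.BijOn (fun y => N + 1 - y) (Set.Icc 1 N) (Set.Icc 1 N) := by
  have hmaps : Set.MapsTo (fun y => N + 1 - y) (Set.Icc 1 N) (Set.Icc 1 N) := by
    intro y hy
    simp only [Set.mem_Icc] at hy ⊢
    omega
  refine Set.InvOn.bijOn ⟨fun y hy => ?_, fun y hy => ?_⟩ hmaps hmaps <;>
    simp only [Set.mem_Icc] at hy <;> dsimp only <;> omega

theorem Set.BijOn.reflect_Icc {α : Type*} {g : α → ℕ} {N : ℕ}
    (hg : Set.BijOn g Set.univ (Set.Icc 1 N)) :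
    Set.BijOn (fun x => N + 1 - g x) Set.univ (Set.Icc 1 N) :=
  (bijOn_reflect_Icc N).comp hg

section EdgeMagic

variable {V : Type*}

theorem emAvg_add_emAvg_of_add_eq [Fintype V] [DecidableEq V] (G : SimpleGraph V)
    [DecidableRel G.Adj] {g g' : V ⊕ G.edgeSet → ℕ} {M : ℕ} (h : ∀ x, g x + g' x = M)
    (hq : G.edgeSet.ncard ≠ 0) : emAvg G g + emAvg G g' = 3 * M := by
  have hdeg : ∑ v, (G.degree v : ℚ) = 2 * G.edgeSet.ncard := by
    rw [← G.coe_edgeFinset, Set.ncard_coe_finset]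
    exact_mod_cast G.sum_degrees_eq_twice_card_edges
  have hedge : (Fintype.card G.edgeSet : ℚ) = G.edgeSet.ncard := by
    rw [Set.ncard_eq_toFinset_card', Set.toFinset_card]
  have hM : ∀ x, (g' x : ℚ) = M - g x := fun x => by rw [← h x]; push_cast; ring
  rw [emAvg, emAvg, ← add_div, div_eq_iff (by exact_mod_cast hq)]
  simp only [hM, mul_sub, sum_sub_distrib, ← sum_mul, sum_const, card_univ, nsmul_eq_mul, hdeg,
    hedge]
  ring

theorem IsEdgeMagic.dual [Fintype V] {G : SimpleGraph V} {f : V ⊕ G.edgeSet → ℕ} {k : ℕ}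
    (hf : IsEdgeMagic G f k) :
    IsEdgeMagic G (fun x => Fintype.card V + G.edgeSet.ncard + 1 - f x)
      (3 * (Fintype.card V + G.edgeSet.ncard + 1) - k) := by
  refine ⟨hf.1.reflect_Icc, fun u v huv => ?_⟩
  have hle : ∀ x, f x ≤ Fintype.card V + G.edgeSet.ncard := fun x =>
    (hf.1.mapsTo (Set.mem_univ x)).2
  have := hf.2 u v huv
  have := hle (Sum.inl u)
  have := hle (Sum.inl v)
  have := hle (Sum.inr ⟨s(u, v), G.mem_edgeSet.mpr huv⟩)
  dsimp only
  omega

variable (G : SimpleGraph V)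

/-- Every edge sum is `k` unless the edge label `k - (x u + x v)` truncates. -/
def valenceLabeling (x : V → ℕ) (k : ℕ) : V ⊕ G.edgeSet → ℕ :=
  Sum.elim x fun e => k - Sym2.lift ⟨fun u v => x u + x v, fun u v => add_comm (x u) (x v)⟩ e.1

theorem valenceLabeling_inr {x : V → ℕ} {k : ℕ} {e : G.edgeSet} {u v : V} (he : e.1 = s(u, v)) :
    valenceLabeling G x k (Sum.inr e) = k - (x u + x v) := by
  simp [valenceLabeling, he]

/-- The isolated vertices absorb the unused labels. -/
theorem exists_isEdgeMagic_of_injOn [Fintype V] (x : V → ℕ) (k : ℕ)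
    (hmaps : Set.MapsTo (valenceLabeling G x k) (Sum.inl '' G.support ∪ Set.range Sum.inr)
      (Set.Icc 1 (Fintype.card V + G.edgeSet.ncard)))
    (hinj : Set.InjOn (valenceLabeling G x k) (Sum.inl '' G.support ∪ Set.range Sum.inr)) :
    ∃ f, IsEdgeMagic G f k := by
  classical
  set N := Fintype.card V + G.edgeSet.ncard
  have hcard : Fintype.card (V ⊕ G.edgeSet) = #(Finset.Icc 1 N) := by
    rw [Fintype.card_sum, Nat.card_Icc, ← Set.toFinset_card, ← Set.ncard_eq_toFinset_card']
    rfl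
  obtain ⟨e, he⟩ := Set.MapsTo.exists_equiv_extend_of_card_eq hcard
    (by simpa only [Finset.coe_Icc] using hmaps) hinj
  refine ⟨fun y => e y, ⟨fun y _ => by simpa using Finset.mem_Icc.mp (e y).2,
    fun y _ y' _ h => e.injective (Subtype.ext h),
    fun m hm => ⟨e.symm ⟨m, by simpa using hm⟩, trivial, by simp⟩⟩, fun u v huv => ?_⟩
  set uv : G.edgeSet := ⟨s(u, v), G.mem_edgeSet.mpr huv⟩
  have hu := he (Sum.inl u) (Or.inl ⟨u, ⟨v, huv⟩, rfl⟩)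
  have hv := he (Sum.inl v) (Or.inl ⟨v, ⟨u, huv.symm⟩, rfl⟩)
  have huv' := he (Sum.inr uv) (Or.inr ⟨uv, rfl⟩)
  -- `1 ≤ k - (x u + x v)` rules out truncation of the edge label
  have hpos := (hmaps (Or.inr ⟨uv, rfl⟩)).1
  rw [valenceLabeling_inr G (u := u) (v := v) rfl] at huv' hpos
  simp only [valenceLabeling, Sum.elim_inl] at hu hv
  dsimp only
  omega

end EdgeMagic

section Star

variable {n l : ℕ}

theorem starUnion_adj {u v : Fin (n + l + 1)} :
    (starUnion n l).Adj u v ↔ (u = 0 ∧ v ≠ 0 ∧ (v : ℕ) ≤ n) ∨ (v = 0 ∧ u ≠ 0 ∧ (u : ℕ) ≤ n) :=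
  Iff.rfl

theorem starUnion_val_le_of_mem_support {v : Fin (n + l + 1)}
    (hv : v ∈ (starUnion n l).support) : (v : ℕ) ≤ n := by
  obtain ⟨w, ⟨rfl, -⟩ | ⟨-, -, h⟩⟩ := hv
  · simp
  · exact h

theorem starUnion_exists_eq_of_mem_edgeSet {e : Sym2 (Fin (n + l + 1))}
    (he : e ∈ (starUnion n l).edgeSet) :
    ∃ w : Fin (n + l + 1), w ≠ 0 ∧ (w : ℕ) ≤ n ∧ e = s(0, w) := by
  induction e using Sym2.ind with
  | _ u v =>
    rcases he with ⟨rfl, hv, hvn⟩ | ⟨rfl, hu, hun⟩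
    · exact ⟨v, hv, hvn, rfl⟩
    · exact ⟨u, hu, hun, Sym2.eq_swap⟩

theorem starUnion_mem_neighborFinset_zero {v : Fin (n + l + 1)} :
    v ∈ (starUnion n l).neighborFinset 0 ↔ v ≠ 0 ∧ (v : ℕ) ≤ n := by
  simp [starUnion_adj]

theorem starUnion_degree_zero : (starUnion n l).degree 0 = n := by
  rw [← SimpleGraph.card_neighborFinset_eq_degree]
  have : (starUnion n l).neighborFinset 0 = Ioc 0 ⟨n, by omega⟩ := by
    ext v
    rw [starUnion_mem_neighborFinset_zero, mem_Ioc, Fin.pos_iff_ne_zero, Fin.le_def]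
  rw [this, Fin.card_Ioc]
  rfl

theorem starUnion_degree_of_ne_zero {v : Fin (n + l + 1)} (hv : v ≠ 0) :
    (starUnion n l).degree v = if (v : ℕ) ≤ n then 1 else 0 := by
  rw [← SimpleGraph.card_neighborFinset_eq_degree]
  split_ifs with h
  · rw [card_eq_one]
    exact ⟨0, by ext w; simp [starUnion_adj, hv, h]⟩
  · rw [card_eq_zero]
    ext w
    simp [starUnion_adj, hv, h]

theorem starUnion_edgeSet_eq_incidenceSet :
    (starUnion n l).edgeSet = (starUnion n l).incidenceSet 0 := by
  ext e
  refine ⟨fun he => ⟨he, ?_⟩, fun he => he.1⟩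
  obtain ⟨w, -, -, rfl⟩ := starUnion_exists_eq_of_mem_edgeSet he
  exact Sym2.mem_mk_left 0 w

theorem starUnion_edgeSet_ncard : (starUnion n l).edgeSet.ncard = n := by
  rw [starUnion_edgeSet_eq_incidenceSet, Set.ncard_eq_toFinset_card', Set.toFinset_card,
    SimpleGraph.card_incidenceSet_eq_degree, starUnion_degree_zero]

theorem starUnion_sum_degree_mul (y : Fin (n + l + 1) → ℕ) :
    ∑ v, (starUnion n l).degree v * y v =
      n * y 0 + ∑ v ∈ (starUnion n l).neighborFinset 0, y v := by
  rw [← add_sum_erase _ _ (mem_univ 0), starUnion_degree_zero]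
  congr 1
  have hsub : (starUnion n l).neighborFinset 0 ⊆ univ.erase 0 := fun v hv =>
    mem_erase.2 ⟨(starUnion_mem_neighborFinset_zero.1 hv).1, mem_univ v⟩
  calc ∑ v ∈ univ.erase 0, (starUnion n l).degree v * y v
      = ∑ v ∈ (starUnion n l).neighborFinset 0, (starUnion n l).degree v * y v := by
        refine (sum_subset hsub fun v hv hv' => ?_).symm
        rw [starUnion_mem_neighborFinset_zero] at hv'
        rw [starUnion_degree_of_ne_zero (ne_of_mem_erase hv),
          if_neg fun h => hv' ⟨ne_of_mem_erase hv, h⟩, zero_mul]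
    _ = ∑ v ∈ (starUnion n l).neighborFinset 0, y v := by
        refine sum_congr rfl fun v hv => ?_
        rw [starUnion_mem_neighborFinset_zero] at hv
        rw [starUnion_degree_of_ne_zero hv.1, if_pos hv.2, one_mul]

theorem starUnion_mul_le_sum (hn : 1 ≤ n) {g : Fin (n + l + 1) ⊕ (starUnion n l).edgeSet → ℕ}
    (hg : Function.Injective g) (hpos : ∀ y, 1 ≤ g y) :
    n * (2 * n + 4) ≤
      ∑ v, (starUnion n l).degree v * g (Sum.inl v) + ∑ e, g (Sum.inr e) := by
  set S := insert (Sum.inl 0) (((starUnion n l).neighborFinset 0).disjSum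
    (univ : Finset (starUnion n l).edgeSet))
  have h0 : Sum.inl 0 ∉ ((starUnion n l).neighborFinset 0).disjSum
      (univ : Finset (starUnion n l).edgeSet) := by simp
  have hcard : #S = 2 * n + 1 := by
    rw [card_insert_of_notMem h0, card_disjSum, SimpleGraph.card_neighborFinset_eq_degree,
      starUnion_degree_zero, card_univ, ← Set.toFinset_card, ← Set.ncard_eq_toFinset_card',
      starUnion_edgeSet_ncard]
    ring
  have hsum := card_mul_card_add_one_le_two_mul_sum_of_injOn (s := S) hg.injOn fun y _ => hpos y
  rw [hcard, sum_insert h0, sum_disjSum] at hsum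
  rw [starUnion_sum_degree_mul]
  have h1 := hpos (Sum.inl 0)
  obtain ⟨m, rfl⟩ : ∃ m, n = m + 1 := ⟨n - 1, by omega⟩
  nlinarith

theorem two_mul_add_four_le_emAvg_starUnion (hn : 1 ≤ n)
    {g : Fin (n + l + 1) ⊕ (starUnion n l).edgeSet → ℕ} (hg : Function.Injective g)
    (hpos : ∀ y, 1 ≤ g y) : (2 * n + 4 : ℚ) ≤ emAvg (starUnion n l) g := by
  rw [emAvg, starUnion_edgeSet_ncard, le_div_iff₀ (by exact_mod_cast hn)]
  have h := (Nat.cast_le (α := ℚ)).2 (starUnion_mul_le_sum hn hg hpos)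
  push_cast at h
  linarith

theorem emAvg_starUnion_le (hn : 1 ≤ n) {g : Fin (n + l + 1) ⊕ (starUnion n l).edgeSet → ℕ}
    (hg : Set.BijOn g Set.univ
      (Set.Icc 1 (Fintype.card (Fin (n + l + 1)) + (starUnion n l).edgeSet.ncard))) :
    emAvg (starUnion n l) g ≤ 4 * n + 3 * l + 2 := by
  have hdual := hg.reflect_Icc
  rw [Fintype.card_fin, starUnion_edgeSet_ncard] at hg hdual
  have hsum := emAvg_add_emAvg_of_add_eq (starUnion n l) (g' := fun y => n + l + 1 + n + 1 - g y)
    (fun y => Nat.add_sub_of_le (by have := (hg.mapsTo (Set.mem_univ y)).2; omega))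
    (by rw [starUnion_edgeSet_ncard]; omega)
  have hlow := two_mul_add_four_le_emAvg_starUnion hn (Set.injOn_univ.1 hdual.injOn)
    fun y => (hdual.mapsTo (Set.mem_univ y)).1
  push_cast at hsum
  linarith

/-- Center `a`, leaf `i` labelled `t + i - 1` and its edge `b + n - i`: the labels form the
disjoint blocks `{a}`, `[t, t + n - 1]` and `[b, b + n - 1]`. -/
theorem starUnion_exists_isEdgeMagic_of_blocks {a t b : ℕ} (ha : 1 ≤ a) (hat : a < t)
    (htb : t + n ≤ b) (hb : b + n ≤ 2 * n + l + 2) :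
    ∃ f, IsEdgeMagic (starUnion n l) f (a + t + b + n - 1) := by
  set x : Fin (n + l + 1) → ℕ := fun v => if (v : ℕ) = 0 then a else t + v - 1 with hx
  have hN : Fintype.card (Fin (n + l + 1)) + (starUnion n l).edgeSet.ncard = 2 * n + l + 1 := by
    rw [Fintype.card_fin, starUnion_edgeSet_ncard]
    ring
  have hvert (v : Fin (n + l + 1)) :
      valenceLabeling (starUnion n l) x (a + t + b + n - 1) (Sum.inl v) =
        if (v : ℕ) = 0 then a else t + v - 1 := rfl
  have hedge (e : (starUnion n l).edgeSet) : ∃ w : Fin (n + l + 1), (w : ℕ) ≠ 0 ∧ (w : ℕ) ≤ n ∧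
      e.1 = s(0, w) ∧ valenceLabeling (starUnion n l) x (a + t + b + n - 1) (Sum.inr e) =
        b + n - w := by
    obtain ⟨w, hw0, hwn, he⟩ := starUnion_exists_eq_of_mem_edgeSet e.2
    have hw0' : (w : ℕ) ≠ 0 := by simpa using Fin.val_ne_iff.2 hw0
    refine ⟨w, hw0', hwn, he, ?_⟩
    rw [valenceLabeling_inr _ he, hx]
    simp only [Fin.val_zero, if_pos, if_neg hw0']
    omega
  refine exists_isEdgeMagic_of_injOn _ x _ ?_ ?_
  · rintro _ (⟨v, hv, rfl⟩ | ⟨e, rfl⟩) <;> rw [Set.mem_Icc, hN]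
    · have := starUnion_val_le_of_mem_support hv
      rw [hvert]
      split_ifs <;> omega
    · obtain ⟨w, hw0, hwn, -, hL⟩ := hedge e
      omega
  · rintro _ (⟨v, hv, rfl⟩ | ⟨e, rfl⟩) _ (⟨v', hv', rfl⟩ | ⟨e', rfl⟩) h
    · have := starUnion_val_le_of_mem_support hv
      have := starUnion_val_le_of_mem_support hv'
      rw [hvert, hvert] at h
      exact congrArg Sum.inl (Fin.ext (by split_ifs at h <;> omega))
    · have := starUnion_val_le_of_mem_support hv
      obtain ⟨w, hw0, hwn, -, hL⟩ := hedge e'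
      rw [hvert, hL] at h
      split_ifs at h <;> omega
    · have := starUnion_val_le_of_mem_support hv'
      obtain ⟨w, hw0, hwn, -, hL⟩ := hedge e
      rw [hvert, hL] at h
      split_ifs at h <;> omega
    · obtain ⟨w, hw0, hwn, he, hL⟩ := hedge e
      obtain ⟨w', hw0', hwn', he', hL'⟩ := hedge e'
      rw [hL, hL'] at h
      have hww : w = w' := Fin.ext (by omega)
      exact congrArg Sum.inr (Subtype.ext (by rw [he, he', hww]))


theorem starUnion_exists_isEdgeMagic {k : ℕ} (hk₁ : 2 * n + 4 ≤ k)
    (hk₂ : k ≤ 2 * n + 2 * l + 4) : ∃ f, IsEdgeMagic (starUnion n l) f k := by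
  rcases le_total k (2 * n + l + 4) with hk | hk
  · obtain ⟨f, hf⟩ := starUnion_exists_isEdgeMagic_of_blocks (n := n) (l := l)
      (a := 1) (t := 2) (b := k - n - 2) le_rfl one_lt_two (by omega) (by omega)
    exact ⟨f, by rwa [show 1 + 2 + (k - n - 2) + n - 1 = k by omega] at hf⟩
  · obtain ⟨f, hf⟩ := starUnion_exists_isEdgeMagic_of_blocks (n := n) (l := l)
      (a := 1) (t := k - 2 * n - l - 2) (b := n + l + 2) le_rfl (by omega) (by omega) (by omega)
    exact ⟨f, by rwa [show 1 + (k - 2 * n - l - 2) + (n + l + 2) + n - 1 = k by omega] at hf⟩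

end Star

/-- For every positive integer `n`, the perfect edge-magic deficiency of the
star `K_{1,n}` is finite: there is a nonnegative integer `l` such that
`K_{1,n} ∪ lK_1` is perfect edge-magic. -/
theorem stmt_18 (n : ℕ) (hn : 1 ≤ n) :
    ∃ l : ℕ, IsPerfectEdgeMagic (starUnion n l) := by
  refine ⟨2 * n, fun k ⟨g₁, hg₁, hk₁⟩ ⟨g₂, hg₂, hk₂⟩ => ?_⟩
  have hlow : 2 * n + 4 ≤ k := by
    have := (two_mul_add_four_le_emAvg_starUnion hn (Set.injOn_univ.1 hg₁.injOn)
      fun y => (hg₁.mapsTo (Set.mem_univ y)).1).trans (Int.ceil_le.1 hk₁)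
    exact_mod_cast this
  have hup : k ≤ 10 * n + 2 := by
    have := (Int.le_floor.1 hk₂).trans (emAvg_starUnion_le hn hg₂)
    have : (k : ℚ) ≤ (10 * n + 2 : ℕ) := by push_cast at this ⊢; linarith
    exact_mod_cast this
  rcases le_total k (6 * n + 4) with hk | hk
  · exact starUnion_exists_isEdgeMagic hlow (by omega)
  · obtain ⟨f, hf⟩ := starUnion_exists_isEdgeMagic (n := n) (l := 2 * n) (k := 12 * n + 6 - k)
      (by omega) (by omega)
    have hdual := hf.dual
    rw [Fintype.card_fin, starUnion_edgeSet_ncard,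
      show 3 * (n + 2 * n + 1 + n + 1) - (12 * n + 6 - k) = k by omega] at hdual
    exact ⟨_, hdual⟩
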